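/- arXiv:2505.20134 — 4 statements merged into one kernel-verified Lean document; each statement's English description precedes it below -/
import Mathlib

section
/- Let F be a field, S an (associative, unital, not necessarily commutative) F-algebra, and D an S-module of finite length which is multiplicity free and such that every composition factor τ of D satisfies End_S(τ) = F. Let W be a finite-dimensional F-vector space, and regard W ⊗_F D as an S-module via the action on the second factor. If M₁ and M₂ are S-submodules of W ⊗_F D such that M₁ ∩ (L ⊗_F D) = M₂ ∩ (L ⊗_F D) inside W ⊗_F D for every one-dimensional F-subspace L ⊆ W, then M₁ = M₂. -/
/-!
Every `S`-submodule `M` of `D ⊗ W` is spanned by the pure tensors it contains; the theorem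
follows, since a pure tensor `d ⊗ w` of `M₁` lies in `M₁ ⊓ (D ⊗ F w) = M₂ ⊓ (D ⊗ F w)`.

Spanning is proved by descending induction on the quotients `D ⧸ Dₖ` of a composition series.
Let `A = Dₖ₊₁ ⧸ Dₖ` be the simple bottom of `D ⧸ Dₖ`; its endomorphisms are scalars. Then
`M ⊓ (A ⊗ W) = A ⊗ U` with `U = {w | A ⊗ w ⊆ M}`, because a simple submodule of `A ⊗ W` is a line
`A ⊗ w`. To lift a pure tensor `d̄ ⊗ w` of the image of `M` in `(D ⧸ A) ⊗ W`, write a preimage in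
`M` as `d ⊗ w + t` with `t ∈ A ⊗ W` and strip off the components of `t` in `A ⊗ U` and `A ⊗ F w`.
What remains, `t' ∈ A ⊗ V` for a complement `V` of `U ⊔ F w`, is killed by every `s` with
`s • d ∈ A`, so its coordinates define maps from a cyclic submodule of `D ⧸ A` onto `A`;
multiplicity-freeness forbids these, so `t' = 0`.
-/

open scoped TensorProduct

/-- Mathlib's former `JordanHolderModule.Iso` (removed since), restored with its old meaning. -/
def JordanHolderModule.Iso {R M : Type*} [Ring R] [AddCommGroup M] [Module R M]
    (X Y : Submodule R M × Submodule R M) : Prop :=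
  Nonempty <| (X.2 ⧸ X.1.comap X.2.subtype) ≃ₗ[R] Y.2 ⧸ Y.1.comap Y.2.subtype

/-- An `S`-module `D` is *multiplicity free* if it admits a composition series (from `⊥` to `⊤`)
whose factors are pairwise non-isomorphic. -/
def MultiplicityFree (S D : Type*) [Ring S] [AddCommGroup D] [Module S D] : Prop :=
  ∃ s : CompositionSeries (Submodule S D), s.head = ⊥ ∧ s.last = ⊤ ∧
    ∀ i j : Fin s.length, i ≠ j →
      ¬ JordanHolderModule.Iso (s i.castSucc, s i.succ) (s j.castSucc, s j.succ)

/-- The image of `D' ⊗_F W'` inside `D ⊗[F] W`, as an `S`-submodule (where `S` acts through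
the factor `D`). -/
def tensorSub (F : Type*) [Field F] {S : Type*} [Ring S] [Algebra F S]
    {D : Type*} [AddCommGroup D] [Module F D] [Module S D] [IsScalarTower F S D]
    {W : Type*} [AddCommGroup W] [Module F W]
    (D' : Submodule S D) (W' : Submodule F W) : Submodule S (D ⊗[F] W) :=
  Submodule.span S {x : D ⊗[F] W | ∃ d ∈ D', ∃ w ∈ W', d ⊗ₜ[F] w = x}

open TensorProduct Submodule

section TensorSub

variable {F S D W : Type*} [Field F] [Ring S] [Algebra F S]
  [AddCommGroup D] [Module F D] [Module S D] [IsScalarTower F S D]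
  [AddCommGroup W] [Module F W]

variable (S) in
noncomputable def evalRight (φ : W →ₗ[F] F) : D ⊗[F] W →ₗ[S] D :=
  (AlgebraTensorModule.rid F S D).toLinearMap ∘ₗ AlgebraTensorModule.lTensor S D φ

@[simp] lemma evalRight_tmul (φ : W →ₗ[F] F) (d : D) (w : W) :
    evalRight S φ (d ⊗ₜ[F] w) = φ w • d := by
  simp [evalRight]

lemma sum_evalRight_tmul {ι : Type*} [Fintype ι] (b : Module.Basis ι F W) (x : D ⊗[F] W) :
    ∑ i, evalRight S (b.coord i) x ⊗ₜ[F] b i = x := by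
  induction x using TensorProduct.induction_on with
  | zero => simp
  | tmul d w =>
    conv_rhs => rw [← b.sum_repr w, tmul_sum]
    simp [smul_tmul]
  | add x y hx hy => simp only [map_add, add_tmul, Finset.sum_add_distrib, hx, hy]

variable {A : Submodule S D} {V X Y : Submodule F W}

lemma tmul_mem_tensorSub {a : D} {v : W} (ha : a ∈ A) (hv : v ∈ V) :
    a ⊗ₜ[F] v ∈ tensorSub F A V :=
  subset_span ⟨a, ha, v, hv, rfl⟩

lemma tensorSub_le {N : Submodule S (D ⊗[F] W)}
    (h : ∀ a ∈ A, ∀ v ∈ V, a ⊗ₜ[F] v ∈ N) : tensorSub F A V ≤ N :=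
  span_le.2 <| by rintro _ ⟨a, ha, v, hv, rfl⟩; exact h a ha v hv

lemma tensorSub_mono (hXY : X ≤ Y) : tensorSub F A X ≤ tensorSub F A Y :=
  tensorSub_le fun _ ha _ hv => tmul_mem_tensorSub ha (hXY hv)

lemma tensorSub_bot : tensorSub F A (⊥ : Submodule F W) = ⊥ :=
  eq_bot_iff.2 <| tensorSub_le fun a _ v hv => by simp [(mem_bot F).1 hv]

lemma tensorSub_sup_le : tensorSub F A (X ⊔ Y) ≤ tensorSub F A X ⊔ tensorSub F A Y :=
  tensorSub_le fun a ha v hv => by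
    obtain ⟨x, hx, y, hy, rfl⟩ := mem_sup.1 hv
    rw [tmul_add]
    exact add_mem_sup (tmul_mem_tensorSub ha hx) (tmul_mem_tensorSub ha hy)

lemma evalRight_mem_of_mem_tensorSub (φ : W →ₗ[F] F) {x : D ⊗[F] W}
    (hx : x ∈ tensorSub F A V) : evalRight S φ x ∈ A :=
  tensorSub_le (N := A.comap (evalRight S φ)) (fun a ha v _ => by
    rw [mem_comap, evalRight_tmul, ← algebraMap_smul S]
    exact A.smul_mem _ ha) hx

lemma tensorSub_top_eq_sup (h : X ⊔ Y = ⊤) :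
    tensorSub F A ⊤ = tensorSub F A X ⊔ tensorSub F A Y :=
  le_antisymm (h ▸ tensorSub_sup_le) (sup_le (tensorSub_mono le_top) (tensorSub_mono le_top))

lemma disjoint_tensorSub (h : IsCompl X Y) : Disjoint (tensorSub F A X) (tensorSub F A Y) := by
  rw [disjoint_iff_inf_le]
  rintro x ⟨hX, hY⟩
  let P := AlgebraTensorModule.lTensor S D (Y.projection X h.symm)
  have hPY : tensorSub F A Y ≤ LinearMap.eqLocus P LinearMap.id :=
    tensorSub_le fun _ _ v hv => by simp [P, projection_apply_of_mem_left h.symm hv]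
  have hPX : tensorSub F A X ≤ LinearMap.ker P :=
    tensorSub_le fun _ _ v hv => by simp [P, projection_apply_of_mem_right h.symm hv]
  have hPx : P x = x := hPY hY
  exact hPx ▸ hPX hX

lemma exists_tmul_eq_of_mem_tensorSub_span_singleton {w : W} {x : D ⊗[F] W}
    (hx : x ∈ tensorSub F A (span F {w})) : ∃ a ∈ A, a ⊗ₜ[F] w = x := by
  let tmulW : D →ₗ[S] D ⊗[F] W :=
    AlgebraTensorModule.lTensor S D (LinearMap.toSpanSingleton F W w) ∘ₗ
      (AlgebraTensorModule.rid F S D).symm.toLinearMap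
  have : tensorSub F A (span F {w}) ≤ A.map tmulW := tensorSub_le fun a ha v hv => by
    obtain ⟨c, rfl⟩ := mem_span_singleton.1 hv
    exact ⟨algebraMap F S c • a, A.smul_mem _ ha, by simp [tmulW]⟩
  obtain ⟨a, ha, rfl⟩ := this hx
  exact ⟨a, ha, by simp [tmulW]⟩

variable [FiniteDimensional F W]

instance [IsArtinian S D] : IsArtinian S (D ⊗[F] W) :=
  (LinearEquiv.isArtinian_iff (AlgebraTensorModule.congr (LinearEquiv.refl S D)
    (Module.finBasis F W).repr ≪≫ₗ finsuppScalarRight F S D _)).2 inferInstance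

end TensorSub

def HasScalarEndomorphisms (F S X : Type*) [Field F] [Ring S] [Algebra F S] [AddCommGroup X]
    [Module S X] : Prop :=
  ∀ φ : X →ₗ[S] X, ∃ c : F, ∀ x, φ x = algebraMap F S c • x

lemma HasScalarEndomorphisms.of_linearEquiv {F S X Y : Type*} [Field F] [Ring S] [Algebra F S]
    [AddCommGroup X] [Module S X] [AddCommGroup Y] [Module S Y] (e : X ≃ₗ[S] Y)
    (h : HasScalarEndomorphisms F S Y) : HasScalarEndomorphisms F S X := fun φ => by
  obtain ⟨c, hc⟩ := h (e.toLinearMap ∘ₗ φ ∘ₗ e.symm.toLinearMap)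
  exact ⟨c, fun x => by simpa using congrArg e.symm (hc (e x))⟩

section SimpleBottom

variable {F S D W : Type*} [Field F] [Ring S] [Algebra F S]
  [AddCommGroup D] [Module F D] [Module S D] [IsScalarTower F S D]
  [AddCommGroup W] [Module F W]
variable {A : Submodule S D} {M : Submodule S (D ⊗[F] W)}

def tmulColon (A : Submodule S D) (M : Submodule S (D ⊗[F] W)) : Submodule F W where
  carrier := {w | ∀ a ∈ A, a ⊗ₜ[F] w ∈ M}
  add_mem' hu hv a ha := by rw [tmul_add]; exact M.add_mem (hu a ha) (hv a ha)
  zero_mem' a _ := by rw [tmul_zero]; exact M.zero_mem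
  smul_mem' c u hu a ha := by rw [tmul_smul, ← algebraMap_smul S]; exact M.smul_mem _ (hu a ha)

lemma tensorSub_tmulColon_le : tensorSub F A (tmulColon A M) ≤ M :=
  tensorSub_le fun a ha _ hw => hw a ha

variable [FiniteDimensional F W]

/-- A simple submodule `T` of `A ⊗ W` is `A ⊗ w` for one vector `w`: by Schur, `T ≅ A`, and the
`W`-coordinates of this isomorphism are endomorphisms of `A`, hence scalars `cⱼ`; `w = ∑ cⱼ bⱼ`. -/
lemma le_tensorSub_tmulColon_of_isSimpleModule [IsSimpleModule S A]
    (hA : HasScalarEndomorphisms F S A) {T : Submodule S (D ⊗[F] W)} [IsSimpleModule S T]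
    (hTA : T ≤ tensorSub F A ⊤) (hTM : T ≤ M) : T ≤ tensorSub F A (tmulColon A M) := by
  let b := Module.finBasis F W
  let coord (i) : T →ₗ[S] A := ((evalRight S (b.coord i)).comp T.subtype).codRestrict A
    fun t => evalRight_mem_of_mem_tensorSub _ (hTA t.2)
  obtain ⟨i, hi⟩ : ∃ i, coord i ≠ 0 := by
    by_contra! h
    have := IsSimpleModule.nontrivial S T
    obtain ⟨t, ht⟩ := exists_ne (0 : T)
    refine ht (Subtype.ext ?_)
    rw [← sum_evalRight_tmul (S := S) b (t : D ⊗[F] W)]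
    exact Finset.sum_eq_zero fun j _ => by
      simpa [coord] using
        congrArg (fun x : A => (x : D) ⊗ₜ[F] b j) (LinearMap.congr_fun (h j) t)
  let e : T ≃ₗ[S] A := LinearEquiv.ofBijective _ (LinearMap.bijective_of_ne_zero hi)
  choose c hc using fun j => hA (coord j ∘ₗ e.symm.toLinearMap)
  set w := ∑ j, c j • b j
  have hT : ∀ t : T, (e t : D) ⊗ₜ[F] w = t := fun t => by
    conv_rhs => rw [← sum_evalRight_tmul (S := S) b (t : D ⊗[F] W)]
    rw [tmul_sum]
    refine Finset.sum_congr rfl fun j _ => ?_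
    have hcj : evalRight S (b.coord j) t = algebraMap F S (c j) • (e t : D) := by
      simpa [coord] using congrArg Subtype.val (hc j (e t))
    rw [hcj, algebraMap_smul, smul_tmul]
  have hw : w ∈ tmulColon A M := fun a ha => by
    have h := hT (e.symm ⟨a, ha⟩)
    rw [e.apply_symm_apply] at h
    exact h ▸ hTM (e.symm _).2
  intro t ht
  rw [show t = _ from (hT ⟨t, ht⟩).symm]
  exact tmul_mem_tensorSub (e _).2 hw

lemma inf_tensorSub_top_le [IsArtinian S D] [IsSimpleModule S A]
    (hA : HasScalarEndomorphisms F S A) (M : Submodule S (D ⊗[F] W)) :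
    M ⊓ tensorSub F A ⊤ ≤ tensorSub F A (tmulColon A M) := by
  set U := tmulColon A M
  obtain ⟨V, hUV⟩ := Submodule.exists_isCompl U
  have hMV : M ⊓ tensorSub F A V = ⊥ := by
    refine (eq_bot_or_exists_atom_le _).resolve_right ?_
    rintro ⟨T, hT, hTle⟩
    have := isSimpleModule_iff_isAtom.2 hT
    have hTU := le_tensorSub_tmulColon_of_isSimpleModule hA
      (hTle.trans (inf_le_right.trans (tensorSub_mono le_top))) (hTle.trans inf_le_left)
    exact hT.1 (le_bot_iff.1 (disjoint_tensorSub hUV hTU (hTle.trans inf_le_right)))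
  rintro x ⟨hxM, hxA⟩
  rw [tensorSub_top_eq_sup hUV.sup_eq_top] at hxA
  obtain ⟨xU, hxU, xV, hxV, rfl⟩ := mem_sup.1 hxA
  have : xV ∈ M ⊓ tensorSub F A V :=
    ⟨by simpa using M.sub_mem hxM (tensorSub_tmulColon_le hxU), hxV⟩
  rw [hMV, mem_bot] at this
  simpa [this] using hxU

end SimpleBottom

section Lifting

variable {F S D W : Type*} [Field F] [Ring S] [Algebra F S]
  [AddCommGroup D] [Module F D] [Module S D] [IsScalarTower F S D]
  [AddCommGroup W] [Module F W]

def pureTensorSpan (M : Submodule S (D ⊗[F] W)) : Submodule S (D ⊗[F] W) :=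
  span S {x | x ∈ M ∧ ∃ (d : D) (w : W), d ⊗ₜ[F] w = x}

lemma pureTensorSpan_le (M : Submodule S (D ⊗[F] W)) : pureTensorSpan M ≤ M :=
  span_le.2 fun _ hx => hx.1

lemma ker_rTensor_eq_tensorSub {D' : Type*} [AddCommGroup D'] [Module F D'] [Module S D']
    [IsScalarTower F S D'] {g : D →ₗ[S] D'} (hg : Function.Surjective g) :
    LinearMap.ker (AlgebraTensorModule.rTensor F W g) = tensorSub F (LinearMap.ker g) ⊤ := by
  refine le_antisymm (fun x hx => ?_) (tensorSub_le fun a ha _ _ => by simp_all)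
  have hexact := rTensor_exact W (LinearMap.exact_subtype_ker_map (g.restrictScalars F)) hg
  obtain ⟨y, rfl⟩ := (hexact x).1 (by simpa using hx)
  clear hx
  induction y using TensorProduct.induction_on with
  | zero => rw [map_zero]; exact zero_mem _
  | tmul a w => exact tmul_mem_tensorSub a.2 trivial
  | add y z hy hz => rw [map_add]; exact add_mem hy hz

variable {A : Submodule S D}

/- `hA` says that `A` is not a quotient of a cyclic submodule of `D ⧸ A`: an `S`-linear map
`S • x̄ → A` with `x̄ ↦ α` exists exactly when the annihilator of `x̄` kills `α`. -/
lemma eq_zero_of_smul_eq_zero_of_smul_mem [FiniteDimensional F W]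
    (hA : ∀ x : D, ∀ α ∈ A, (∀ s : S, s • x ∈ A → s • α = 0) → α = 0)
    {d : D} {t : D ⊗[F] W} (ht : t ∈ tensorSub F A ⊤)
    (h : ∀ s : S, s • d ∈ A → s • t = 0) : t = 0 := by
  rw [← sum_evalRight_tmul (S := S) (Module.finBasis F W) t]
  refine Finset.sum_eq_zero fun i _ => ?_
  rw [hA d _ (evalRight_mem_of_mem_tensorSub _ ht) fun s hs => by
    rw [← map_smul, h s hs, map_zero], zero_tmul]

lemma exists_add_tmul_mem [FiniteDimensional F W] [IsArtinian S D] [IsSimpleModule S A]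
    (hEnd : HasScalarEndomorphisms F S A)
    (hA : ∀ x : D, ∀ α ∈ A, (∀ s : S, s • x ∈ A → s • α = 0) → α = 0)
    {M : Submodule S (D ⊗[F] W)} {m : D ⊗[F] W} {d : D} {w : W} (hm : m ∈ M)
    (hmd : m - d ⊗ₜ[F] w ∈ tensorSub F A ⊤) : ∃ a ∈ A, (d + a) ⊗ₜ[F] w ∈ M := by
  set U := tmulColon A M
  obtain ⟨V, hV⟩ := Submodule.exists_isCompl (U ⊔ span F {w})
  rw [tensorSub_top_eq_sup hV.sup_eq_top] at hmd
  obtain ⟨t₁, ht₁, tV, htV, hsum⟩ := mem_sup.1 hmd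
  obtain ⟨tU, htU, t₀, ht₀, rfl⟩ := mem_sup.1 (tensorSub_sup_le ht₁)
  obtain ⟨a, ha, rfl⟩ := exists_tmul_eq_of_mem_tensorSub_span_singleton ht₀
  have hm' : (d + a) ⊗ₜ[F] w + tV ∈ M := by
    have : (d + a) ⊗ₜ[F] w + tV = m - tU := by
      rw [add_tmul, eq_sub_iff_add_eq, ← sub_add_cancel m (d ⊗ₜ[F] w), ← hsum]; abel
    exact this ▸ M.sub_mem hm (tensorSub_tmulColon_le htU)
  suffices tV = 0 by exact ⟨a, ha, by simpa [this] using hm'⟩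
  refine eq_zero_of_smul_eq_zero_of_smul_mem hA (d := d + a) (tensorSub_mono le_top htV)
    fun s hs => ?_
  -- `s • ((d + a) ⊗ w + tV)` lies in `M ⊓ (A ⊗ W) = A ⊗ U`, so `s • tV` lies in
  -- `A ⊗ (U ⊔ F w)` as well as in the complementary `A ⊗ V`.
  have hsm' : s • ((d + a) ⊗ₜ[F] w + tV) ∈ tensorSub F A U := by
    refine inf_tensorSub_top_le hEnd M ⟨M.smul_mem s hm', ?_⟩
    rw [smul_add, smul_tmul']
    exact add_mem (tmul_mem_tensorSub hs trivial) (smul_mem _ s (tensorSub_mono le_top htV))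
  have hsUw : s • tV ∈ tensorSub F A (U ⊔ span F {w}) := by
    have : s • tV = s • ((d + a) ⊗ₜ[F] w + tV) - (s • (d + a)) ⊗ₜ[F] w := by
      rw [smul_add, smul_tmul']; abel
    rw [this]
    exact sub_mem (tensorSub_mono le_sup_left hsm')
      (tmul_mem_tensorSub hs (mem_sup_right (mem_span_singleton_self w)))
  exact disjoint_def.1 (disjoint_tensorSub hV) _ hsUw (smul_mem _ s htV)

theorem le_pureTensorSpan_of_surjective [FiniteDimensional F W] [IsArtinian S D]
    {D' : Type*} [AddCommGroup D'] [Module F D'] [Module S D'] [IsScalarTower F S D']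
    {g : D →ₗ[S] D'} (hg : Function.Surjective g) [IsSimpleModule S (LinearMap.ker g)]
    (hEnd : HasScalarEndomorphisms F S (LinearMap.ker g))
    (hA : ∀ x : D, ∀ α ∈ LinearMap.ker g, (∀ s : S, g (s • x) = 0 → s • α = 0) → α = 0)
    (hD' : ∀ M' : Submodule S (D' ⊗[F] W), M' ≤ pureTensorSpan M')
    (M : Submodule S (D ⊗[F] W)) : M ≤ pureTensorSpan M := by
  set π := AlgebraTensorModule.rTensor F W g
  set N := pureTensorSpan M
  have hker : LinearMap.ker π = tensorSub F (LinearMap.ker g) ⊤ := ker_rTensor_eq_tensorSub hg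
  have hMker : M ⊓ LinearMap.ker π ≤ N := hker ▸ (inf_tensorSub_top_le hEnd M).trans
    (tensorSub_le fun a ha w hw => subset_span ⟨hw a ha, a, w, rfl⟩)
  have hlift : M.map π ≤ N.map π := by
    refine (hD' _).trans (span_le.2 ?_)
    rintro _ ⟨⟨m, hm, hπm⟩, d', w, rfl⟩
    obtain ⟨d, rfl⟩ := hg d'
    obtain ⟨a, ha, hmem⟩ := exists_add_tmul_mem hEnd hA hm
      (show m - d ⊗ₜ[F] w ∈ tensorSub F _ ⊤ by
        rw [← hker, LinearMap.mem_ker, map_sub, hπm]; simp [π])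
    exact ⟨(d + a) ⊗ₜ[F] w, subset_span ⟨hmem, _, _, rfl⟩, by simp_all [π]⟩
  intro x hx
  obtain ⟨y, hy, hxy⟩ := hlift (mem_map_of_mem hx)
  have : x - y ∈ N := hMker ⟨M.sub_mem hx (pureTensorSpan_le M hy), by simp [hxy]⟩
  simpa using N.add_mem hy this

end Lifting

section CompositionSeries

universe u

variable {S D : Type*} [Ring S] [AddCommGroup D] [Module S D]

lemma nonempty_linearEquiv_of_ker_le {Z T T' : Type*} [AddCommGroup Z] [Module S Z]
    [AddCommGroup T] [Module S T] [AddCommGroup T'] [Module S T'] [IsSimpleModule S T]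
    [IsSimpleModule S T'] {u : Z →ₗ[S] T} {f : Z →ₗ[S] T'}
    (h : LinearMap.ker u ≤ LinearMap.ker f) (hf : f ≠ 0) : Nonempty (T ≃ₗ[S] T') := by
  have hu : u ≠ 0 := by
    rintro rfl
    exact hf (LinearMap.ker_eq_top.1 (top_le_iff.1 (by simpa using h)))
  have hus := LinearMap.surjective_of_ne_zero hu
  have hker : LinearMap.ker u = LinearMap.ker f :=
    ((LinearMap.isCoatom_ker_of_surjective hus).le_iff.1 h).resolve_left
      (mt LinearMap.ker_eq_top.1 hf) |>.symm
  exact ⟨(u.quotKerEquivOfSurjective hus).symm ≪≫ₗ quotEquivOfEq _ _ hker ≪≫ₗ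
    f.quotKerEquivOfSurjective (LinearMap.surjective_of_ne_zero hf)⟩

abbrev compositionFactor (s : CompositionSeries (Submodule S D)) (i : Fin s.length) : Type _ :=
  ↥(s i.succ) ⧸ (s i.castSucc).comap (s i.succ).subtype

variable (s : CompositionSeries (Submodule S D))

instance (i : Fin s.length) : IsSimpleModule S (compositionFactor s i) :=
  (covBy_iff_quot_is_simple (s.step i).le).1 (s.step i)

/-- In a series with pairwise non-isomorphic factors, the factor `s (k+1) / s k` receives no
nonzero map from a module `Z` that vanishes on `u⁻¹ (s (k+1))`, for any `u : Z → D`: otherwise, at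
the first step `s j ⋖ s (j+1)` of the filtration `u⁻¹ (s j)` where the map stops vanishing, it
would identify the factor at `j > k` with the one at `k`. -/
theorem CompositionSeries.eq_zero_of_forall_mem_succ (hlast : s.last = ⊤)
    (hdist : ∀ i j : Fin s.length, i ≠ j →
      ¬ JordanHolderModule.Iso (s i.castSucc, s i.succ) (s j.castSucc, s j.succ))
    {k : Fin s.length} {Z : Type u} [AddCommGroup Z] [Module S Z] (u : Z →ₗ[S] D)
    (f : Z →ₗ[S] compositionFactor s k) (hf : ∀ z, u z ∈ s k.succ → f z = 0) : f = 0 := by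
  suffices H : ∀ j : Fin (s.length + 1), ∀ (Z : Type u) [AddCommGroup Z] [Module S Z]
      (u : Z →ₗ[S] D) (f : Z →ₗ[S] compositionFactor s k),
      (∀ z, u z ∈ s j) → (∀ z, u z ∈ s k.succ → f z = 0) → f = 0 from
    H (Fin.last _) Z u f (fun z => by rw [show s (Fin.last _) = ⊤ from hlast]; exact mem_top) hf
  intro j
  induction j using Fin.induction with
  | zero =>
    intro Z _ _ u f hu hf
    exact LinearMap.ext fun z => hf z (s.strictMono.monotone (Fin.zero_le _) (hu z))
  | succ j ih =>
    intro Z _ _ u f hu hf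
    have hvan : ∀ z, u z ∈ s j.castSucc → f z = 0 := fun z hz =>
      LinearMap.congr_fun (ih (comap u (s j.castSucc)) (u ∘ₗ (comap u _).subtype)
        (f ∘ₗ (comap u _).subtype) (fun z => z.2) fun z => hf z) ⟨z, hz⟩
    by_contra hf0
    let v : Z →ₗ[S] compositionFactor s j := mkQ _ ∘ₗ u.codRestrict _ hu
    obtain ⟨e⟩ := nonempty_linearEquiv_of_ker_le (u := v) (fun z hz => hvan z <| by
      simpa [v, Submodule.Quotient.mk_eq_zero] using hz) hf0
    obtain rfl : j = k := by_contra fun hjk => hdist j k hjk ⟨e⟩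
    exact hf0 (LinearMap.ext fun z => hf z (hu z))

theorem CompositionSeries.mem_castSucc_of_smul_mem (hlast : s.last = ⊤)
    (hdist : ∀ i j : Fin s.length, i ≠ j →
      ¬ JordanHolderModule.Iso (s i.castSucc, s i.succ) (s j.castSucc, s j.succ))
    {k : Fin s.length} {y β : D} (hβ : β ∈ s k.succ)
    (h : ∀ r : S, r • y ∈ s k.succ → r • β ∈ s k.castSucc) : β ∈ s k.castSucc := by
  have := s.eq_zero_of_forall_mem_succ hlast hdist (LinearMap.toSpanSingleton S D y)
    (LinearMap.toSpanSingleton S _ (mkQ _ ⟨β, hβ⟩))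
    fun r hr => by
      rw [LinearMap.toSpanSingleton_apply, ← map_smul]
      exact (Submodule.Quotient.mk_eq_zero _).2 (h r hr)
  simpa [Submodule.Quotient.mk_eq_zero] using LinearMap.congr_fun this 1

end CompositionSeries

section Quotients

variable {S D : Type*} [Ring S] [AddCommGroup D] [Module S D] {p p' : Submodule S D}

lemma range_mkQ_comp_subtype_eq_ker_factor (H : p ≤ p') :
    LinearMap.range (p.mkQ ∘ₗ p'.subtype) = LinearMap.ker (factor H) := by
  ext x
  induction x using Submodule.Quotient.induction_on with
  | H y =>
    rw [LinearMap.mem_ker, ← mkQ_apply, factor_mk]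
    simp only [LinearMap.mem_range, LinearMap.comp_apply, mkQ_apply, Subtype.exists,
      subtype_apply, Submodule.Quotient.eq, Submodule.Quotient.mk_eq_zero]
    refine ⟨fun ⟨z, hz, hzy⟩ => ?_, fun hy => ⟨y, hy, by simp⟩⟩
    simpa using p'.sub_mem hz (H hzy)

noncomputable def kerFactorEquiv (H : p ≤ p') :
    LinearMap.ker (factor H) ≃ₗ[S] ↥p' ⧸ p.comap p'.subtype :=
  LinearEquiv.ofEq _ _ (range_mkQ_comp_subtype_eq_ker_factor H).symm ≪≫ₗ
    (LinearMap.quotKerEquivRange _).symm ≪≫ₗ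
    quotEquivOfEq _ _ (by rw [LinearMap.ker_comp, ker_mkQ])

end Quotients

section PureTensors

variable {F S D W : Type*} [Field F] [Ring S] [Algebra F S]
  [AddCommGroup D] [Module F D] [Module S D] [IsScalarTower F S D]
  [AddCommGroup W] [Module F W]

lemma le_pureTensorSpan_of_linearEquiv {D' : Type*} [AddCommGroup D'] [Module F D']
    [Module S D'] [IsScalarTower F S D'] (e : D ≃ₗ[S] D')
    (hD' : ∀ M' : Submodule S (D' ⊗[F] W), M' ≤ pureTensorSpan M')
    (M : Submodule S (D ⊗[F] W)) : M ≤ pureTensorSpan M := by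
  let E := AlgebraTensorModule.congr e (LinearEquiv.refl F W)
  have hE : (pureTensorSpan (M.map E.toLinearMap)).map E.symm.toLinearMap ≤
      pureTensorSpan M := by
    refine (map_span_le _ _ _).2 ?_
    rintro _ ⟨⟨x, hx, rfl⟩, d', w, hd'⟩
    exact subset_span ⟨by simpa using hx, e.symm d', w, by simp [E, ← hd']⟩
  intro x hx
  simpa using hE (mem_map_of_mem (hD' _ (mem_map_of_mem hx)))

theorem le_pureTensorSpan_of_compositionSeries [FiniteDimensional F W] [IsArtinian S D]
    (s : CompositionSeries (Submodule S D)) (hhead : s.head = ⊥) (hlast : s.last = ⊤)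
    (hdist : ∀ i j : Fin s.length, i ≠ j →
      ¬ JordanHolderModule.Iso (s i.castSucc, s i.succ) (s j.castSucc, s j.succ))
    (hEnd : ∀ i, HasScalarEndomorphisms F S (compositionFactor s i))
    (M : Submodule S (D ⊗[F] W)) : M ≤ pureTensorSpan M := by
  suffices key : ∀ k, ∀ M : Submodule S ((D ⧸ s k) ⊗[F] W), M ≤ pureTensorSpan M from
    le_pureTensorSpan_of_linearEquiv (quotEquivOfEqBot (s 0) hhead).symm (key 0) M
  intro k
  induction k using Fin.reverseInduction with
  | last =>
    have : Subsingleton (D ⧸ s (Fin.last _)) := Submodule.Quotient.subsingleton_iff.2 hlast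
    intro M x _
    rw [Subsingleton.elim x 0]
    exact zero_mem _
  | cast i ih =>
    have H := (s.step i).le
    have := IsSimpleModule.congr (kerFactorEquiv H)
    refine le_pureTensorSpan_of_surjective (factor_surjective H)
      ((hEnd i).of_linearEquiv (kerFactorEquiv H)) (fun x α hα hx => ?_) ih
    induction x using Submodule.Quotient.induction_on with | H y =>
    obtain ⟨β, rfl⟩ := mkQ_surjective _ α
    have hβ : β ∈ s i.succ := by
      simpa [Submodule.Quotient.mk_eq_zero] using (factor_mk H β).symm.trans hα
    refine (Submodule.Quotient.mk_eq_zero _).2 <| s.mem_castSucc_of_smul_mem hlast hdist (y := y)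
      hβ fun r hr => (Submodule.Quotient.mk_eq_zero _).1 (hx r ?_)
    rw [← mkQ_apply, ← map_smul, factor_mk]
    exact (Submodule.Quotient.mk_eq_zero _).2 hr

lemma le_of_forall_inf_tensorSub_line_le {M₁ M₂ : Submodule S (D ⊗[F] W)}
    (hM₁ : M₁ ≤ pureTensorSpan M₁)
    (h : ∀ L : Submodule F W, Module.finrank F L = 1 →
      M₁ ⊓ tensorSub F (⊤ : Submodule S D) L ≤ M₂ ⊓ tensorSub F (⊤ : Submodule S D) L) :
    M₁ ≤ M₂ := by
  refine hM₁.trans (span_le.2 ?_)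
  rintro _ ⟨hx, d, w, rfl⟩
  by_cases hw : w = 0
  · simp [hw]
  exact (h _ (finrank_span_singleton hw)
    ⟨hx, tmul_mem_tensorSub (mem_top : d ∈ ⊤) (mem_span_singleton_self w)⟩).1

end PureTensors

/-- **Lemma 3.1.5(i)**: if `D` is a multiplicity-free `S`-module of finite length all of whose
composition factors have endomorphism ring reduced to the scalars `F`, and `W` is a
finite-dimensional `F`-vector space, then two `S`-submodules `M₁, M₂` of `W ⊗_F D`
(realised here as `D ⊗[F] W`, with `S` acting through `D`) agreeing with every
`L ⊗_F D` for all lines `L ⊆ W` are equal. -/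
theorem statement0 {F S D W : Type*} [Field F] [Ring S] [Algebra F S]
    [AddCommGroup D] [Module F D] [Module S D] [IsScalarTower F S D]
    [AddCommGroup W] [Module F W] [FiniteDimensional F W]
    (hfl : IsFiniteLength S D)
    (hmf : MultiplicityFree S D)
    (hEnd : ∀ A B : Submodule S D, A ≤ B →
      IsSimpleModule S (B ⧸ A.comap B.subtype) →
      ∀ φ : (B ⧸ A.comap B.subtype) →ₗ[S] (B ⧸ A.comap B.subtype),
        ∃ c : F, ∀ x, φ x = algebraMap F S c • x)
    (M₁ M₂ : Submodule S (D ⊗[F] W))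
    (h : ∀ L : Submodule F W, Module.finrank F L = 1 →
      M₁ ⊓ tensorSub F (⊤ : Submodule S D) L = M₂ ⊓ tensorSub F (⊤ : Submodule S D) L) :
    M₁ = M₂ := by
  obtain ⟨s, hhead, hlast, hdist⟩ := hmf
  have := (isFiniteLength_iff_isNoetherian_isArtinian.1 hfl).2
  have hpure (M : Submodule S (D ⊗[F] W)) : M ≤ pureTensorSpan M :=
    le_pureTensorSpan_of_compositionSeries s hhead hlast hdist
      (fun i => hEnd _ _ (s.step i).le inferInstance) M
  exact le_antisymm (le_of_forall_inf_tensorSub_line_le (hpure M₁) fun L hL => (h L hL).le)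
    (le_of_forall_inf_tensorSub_line_le (hpure M₂) fun L hL => (h L hL).ge)
end

section
/- Fix an integer f ≥ 1 and an integer p. Then the intersection 𝒫 ∩ 𝒟 consists of exactly one tuple, namely the tuple λ with λ_i = x_i (i.e. (ε_i, c_i) = (1, 0)) for all i ∈ ℤ/f. -/
/-- The set `𝒟` of `f`-tuples: a tuple is a function `λ : ℤ/f → {±1} × ℤ`, encoded as
`ZMod f → ℤ × ℤ`, where the pairs `(1,0), (1,1), (-1,p-2), (-1,p-3)` encode the affine
functions `x, x+1, p-2-x, p-3-x` respectively. -/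
def Dset (f : ℕ) (p : ℤ) : Set (ZMod f → ℤ × ℤ) :=
  {lam | ∀ i : ZMod f,
    (lam i = (1, 0) ∨ lam i = (1, 1) ∨ lam i = (-1, p - 2) ∨ lam i = (-1, p - 3)) ∧
    ((lam i = (1, 0) ∨ lam i = (1, 1)) →
      (lam (i + 1) = (1, 0) ∨ lam (i + 1) = (-1, p - 2))) ∧
    ((lam i = (-1, p - 2) ∨ lam i = (-1, p - 3)) →
      (lam (i + 1) = (-1, p - 3) ∨ lam (i + 1) = (1, 1)))}

/-- The set `𝒫` of `f`-tuples: the pairs `(1,0), (1,-1), (-1,p-2), (-1,p-1)` encode the affine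
functions `x, x-1, p-2-x, p-1-x` respectively. -/
def Pset (f : ℕ) (p : ℤ) : Set (ZMod f → ℤ × ℤ) :=
  {lam | ∀ i : ZMod f,
    (lam i = (1, 0) ∨ lam i = (1, -1) ∨ lam i = (-1, p - 2) ∨ lam i = (-1, p - 1)) ∧
    ((lam i = (1, 0) ∨ lam i = (1, -1)) →
      (lam (i + 1) = (1, 0) ∨ lam (i + 1) = (-1, p - 2))) ∧
    ((lam i = (-1, p - 2) ∨ lam i = (-1, p - 1)) →
      (lam (i + 1) = (-1, p - 1) ∨ lam (i + 1) = (1, -1)))}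

/-!
Pointwise, the only affine functions allowed both in `𝒫` and in `𝒟` are `x` and `p-2-x`.
But in `𝒟` the entry after `p-2-x` is `p-3-x` or `x+1`, neither of which is allowed in `𝒫`,
so `p-2-x` never occurs and every entry is `x`.
-/

section

variable {f : ℕ} {p : ℤ} {lam : ZMod f → ℤ × ℤ}

theorem const_x_mem_Pset (f : ℕ) (p : ℤ) : (fun _ : ZMod f => ((1 : ℤ), (0 : ℤ))) ∈ Pset f p :=
  fun _ => ⟨Or.inl rfl, fun _ => Or.inl rfl, fun h => by simp [Prod.ext_iff] at h⟩

theorem const_x_mem_Dset (f : ℕ) (p : ℤ) : (fun _ : ZMod f => ((1 : ℤ), (0 : ℤ))) ∈ Dset f p :=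
  fun _ => ⟨Or.inl rfl, fun _ => Or.inl rfl, fun h => by simp [Prod.ext_iff] at h⟩

theorem eq_x_or_eq_of_mem_Pset_of_mem_Dset (hP : lam ∈ Pset f p) (hD : lam ∈ Dset f p)
    (i : ZMod f) : lam i = (1, 0) ∨ lam i = (-1, p - 2) := by
  rcases (hP i).1 with h | h | h | h <;> rcases (hD i).1 with h' | h' | h' | h' <;>
    simp_all [Prod.ext_iff]

theorem eq_x_of_mem_Pset_of_mem_Dset (hP : lam ∈ Pset f p) (hD : lam ∈ Dset f p)
    (i : ZMod f) : lam i = (1, 0) := by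
  refine (eq_x_or_eq_of_mem_Pset_of_mem_Dset hP hD i).resolve_right fun hi => ?_
  have hnext := (hD i).2.2 (Or.inl hi)
  rcases eq_x_or_eq_of_mem_Pset_of_mem_Dset hP hD (i + 1) with h | h <;>
    rcases hnext with h' | h' <;> simp_all [Prod.ext_iff]

end

theorem statement3_general (f : ℕ) (p : ℤ) :
    Pset f p ∩ Dset f p = {fun _ : ZMod f => ((1 : ℤ), (0 : ℤ))} := by
  ext lam
  constructor
  · rintro ⟨hP, hD⟩
    exact funext (eq_x_of_mem_Pset_of_mem_Dset hP hD)
  · rintro rfl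
    exact ⟨const_x_mem_Pset f p, const_x_mem_Dset f p⟩

/-- **Claim (57) in the proof of Theorem 3.2.9**: the intersection `𝒫 ∩ 𝒟` consists exactly of
the tuple which is constantly `x` (i.e. `(1,0)`). -/
theorem statement3 (f : ℕ) (hf : 1 ≤ f) (p : ℤ) :
    Pset f p ∩ Dset f p = {fun _ : ZMod f => ((1 : ℤ), (0 : ℤ))} :=
  statement3_general f p
end

section
/- Let F be a field, V an F-vector space, A a ring, and M an A-module. Suppose that to every one-dimensional F-subspace L of V there is assigned a simple A-submodule N(L) of M, in such a way that N(L') ⊆ N(L₁) + N(L₂) whenever L', L₁, L₂ are one-dimensional subspaces of V with L' ⊆ L₁ + L₂. Then the modules N(L) are pairwise isomorphic: N(L₁) ≅ N(L₂) as A-modules for all one-dimensional subspaces L₁, L₂ of V. -/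
/-!
Choose a third line `L₃` with `L₁ ≤ L₂ ⊔ L₃` and `L₂ ≤ L₁ ⊔ L₃`. Then the simple module `N L₁`
sits in `N L₂ ⊔ N L₃`, so it is isomorphic to `N L₂` or to `N L₃`; symmetrically `N L₂` is
isomorphic to `N L₁` or to `N L₃`. In every case `N L₁ ≅ N L₂`.
-/

open Module Submodule

theorem Submodule.nonempty_linearEquiv_or_of_le_sup {A M : Type*} [Ring A] [AddCommGroup M]
    [Module A M] {P Q₁ Q₂ : Submodule A M} [IsSimpleModule A P] [IsSimpleModule A Q₁]
    [IsSimpleModule A Q₂] (hle : P ≤ Q₁ ⊔ Q₂) :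
    Nonempty (P ≃ₗ[A] Q₁) ∨ Nonempty (P ≃ₗ[A] Q₂) := by
  have : ∀ Q : ({Q₁, Q₂} : Set (Submodule A M)), IsSimpleModule A Q := by
    rintro ⟨Q, rfl | rfl⟩ <;> assumption
  obtain ⟨Q, hQ, e⟩ := P.linearEquiv_of_le_sSup {Q₁, Q₂} (by rwa [sSup_pair])
  rcases hQ with rfl | rfl
  exacts [Or.inl e, Or.inr e]

/-- For lines `F ∙ v₁` and `F ∙ v₂`, the line `F ∙ (v₁ + v₂)` works unless `v₁ + v₂ = 0`, in which
case the two lines coincide. -/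
theorem exists_finrank_eq_one_le_sup_and_le_sup {F V : Type*} [DivisionRing F] [AddCommGroup V]
    [Module F V] {L₁ L₂ : Submodule F V} (h₁ : finrank F L₁ = 1) (h₂ : finrank F L₂ = 1) :
    ∃ L₃ : Submodule F V, finrank F L₃ = 1 ∧ L₁ ≤ L₂ ⊔ L₃ ∧ L₂ ≤ L₁ ⊔ L₃ := by
  obtain ⟨v₁, hv₁, hv₁0⟩ := L₁.ne_bot_iff.mp (isAtom_iff_finrank_eq_one.mpr h₁).ne_bot
  obtain ⟨v₂, hv₂, hv₂0⟩ := L₂.ne_bot_iff.mp (isAtom_iff_finrank_eq_one.mpr h₂).ne_bot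
  obtain rfl := eq_span_singleton_of_mem_of_finrank_eq_one h₁ hv₁ hv₁0
  obtain rfl := eq_span_singleton_of_mem_of_finrank_eq_one h₂ hv₂ hv₂0
  simp only [span_singleton_le_iff_mem]
  by_cases hv : v₁ + v₂ = 0
  · refine ⟨F ∙ v₁, h₁, mem_sup_right hv₁, mem_sup_left (mem_span_singleton.mpr ⟨-1, ?_⟩)⟩
    rw [neg_one_smul, eq_neg_of_add_eq_zero_right hv]
  · have hv₃ : v₁ + v₂ ∈ F ∙ (v₁ + v₂) := mem_span_singleton_self _
    refine ⟨F ∙ (v₁ + v₂), finrank_span_singleton hv, ?_, ?_⟩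
    · simpa using sub_mem (mem_sup_right hv₃) (mem_sup_left hv₂)
    · simpa using sub_mem (mem_sup_right hv₃) (mem_sup_left hv₁)

/-- **Step 1 of the proof of Theorem 3.2.9, abstract form**: suppose that to every line
(one-dimensional `F`-subspace) `L` of an `F`-vector space `V` there is assigned a simple
`A`-submodule `N L` of an `A`-module `M`, in such a way that `N L' ⊆ N L₁ + N L₂` whenever
`L' ⊆ L₁ + L₂`. Then the `N L` are pairwise isomorphic as `A`-modules. -/
theorem statement6 {F V A M : Type*} [Field F] [AddCommGroup V] [Module F V]
    [Ring A] [AddCommGroup M] [Module A M]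
    (N : Submodule F V → Submodule A M)
    (hsimple : ∀ L : Submodule F V, Module.finrank F L = 1 → IsSimpleModule A (N L))
    (hsum : ∀ L' L₁ L₂ : Submodule F V, Module.finrank F L' = 1 →
      Module.finrank F L₁ = 1 → Module.finrank F L₂ = 1 →
      L' ≤ L₁ ⊔ L₂ → N L' ≤ N L₁ ⊔ N L₂) :
    ∀ L₁ L₂ : Submodule F V, Module.finrank F L₁ = 1 → Module.finrank F L₂ = 1 →
      Nonempty ((N L₁) ≃ₗ[A] (N L₂)) := by
  intro L₁ L₂ h₁ h₂
  obtain ⟨L₃, h₃, le₁, le₂⟩ := exists_finrank_eq_one_le_sup_and_le_sup h₁ h₂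
  have := hsimple L₁ h₁
  have := hsimple L₂ h₂
  have := hsimple L₃ h₃
  rcases nonempty_linearEquiv_or_of_le_sup (hsum _ _ _ h₁ h₂ h₃ le₁) with h₁₂ | ⟨⟨e₁₃⟩⟩
  · exact h₁₂
  rcases nonempty_linearEquiv_or_of_le_sup (hsum _ _ _ h₂ h₁ h₃ le₂) with ⟨⟨e₂₁⟩⟩ | ⟨⟨e₂₃⟩⟩
  · exact ⟨e₂₁.symm⟩
  · exact ⟨e₁₃.trans e₂₃.symm⟩
end

section
/- Let k be a field, Λ a k-algebra, I a two-sided ideal of Λ, and n ≥ 1 an integer. For a Λ-module N write N[Iⁿ] := { x ∈ N : a·x = 0 for all a ∈ Iⁿ }, a Λ-submodule of N. Let M be a Λ-module such that M[Iⁿ] is finite-dimensional over k, and let A ⊆ B ⊆ M be Λ-submodules. Assume that the natural maps M[Iⁿ] → (M/A)[Iⁿ] and M[Iⁿ] → (M/B)[Iⁿ] induced by the quotient maps are surjective. Then the natural map B[Iⁿ] → (B/A)[Iⁿ] is surjective; equivalently, the sequence 0 → A[Iⁿ] → B[Iⁿ] → (B/A)[Iⁿ] → 0 is exact. -/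
/-- For a `k`-subspace `J` of a `k`-algebra `Λ` and a `Λ`-module `M`, the set
`M[J] = { x ∈ M | a • x = 0 for all a ∈ J }`, as a `k`-subspace of `M`. -/
def torsionSubspace (k Λ : Type*) [Field k] [Ring Λ] [Algebra k Λ] (J : Submodule k Λ)
    (M : Type*) [AddCommGroup M] [Module k M] [Module Λ M] [IsScalarTower k Λ M] :
    Submodule k M where
  carrier := {x | ∀ a ∈ J, a • x = 0}
  add_mem' := fun hx hy => by
    intro a ha
    rw [smul_add, hx a ha, hy a ha, add_zero]
  zero_mem' := fun a _ => smul_zero a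
  smul_mem' := fun c x hx => by
    intro a ha
    rw [smul_comm, hx a ha, smul_zero]

theorem statement7_general {k Λ : Type*} [Field k] [Ring Λ] [Algebra k Λ]
    (I : Submodule k Λ)
    (n : ℕ)
    {M : Type*} [AddCommGroup M] [Module k M] [Module Λ M] [IsScalarTower k Λ M]
    (A B : Submodule Λ M) (hAB : A ≤ B)
    (hA : ∀ z : M ⧸ A, (∀ a ∈ I ^ n, a • z = 0) →
      ∃ x : M, (∀ a ∈ I ^ n, a • x = 0) ∧ A.mkQ x = z) :
    ∀ z : M ⧸ A, z ∈ B.map A.mkQ → (∀ a ∈ I ^ n, a • z = 0) →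
      ∃ x ∈ B, (∀ a ∈ I ^ n, a • x = 0) ∧ A.mkQ x = z := by
  intro z hzB hztor
  obtain ⟨x, hxtor, rfl⟩ := hA z hztor
  -- Any lift to `M` already lies in `B`, since the preimage of `B/A` in `M` is `A ⊔ B = B`.
  have hxB : x ∈ (B.map A.mkQ).comap A.mkQ := hzB
  rw [Submodule.comap_map_mkQ, sup_eq_right.mpr hAB] at hxB
  exact ⟨x, hxB, hxtor, rfl⟩

/-- **Dévissage in the proof of Proposition 4.2.4(i)**: let `Λ` be a `k`-algebra, `I` a two-sided
ideal of `Λ`, `n ≥ 1`, and `M` a `Λ`-module whose `Iⁿ`-torsion `M[Iⁿ]` is finite-dimensional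
over `k`.  If `A ⊆ B ⊆ M` are `Λ`-submodules such that the natural maps `M[Iⁿ] → (M/A)[Iⁿ]`
and `M[Iⁿ] → (M/B)[Iⁿ]` are surjective, then the natural map `B[Iⁿ] → (B/A)[Iⁿ]` is surjective
(where `B/A` is realised as the image of `B` in `M/A`). -/
theorem statement7 {k Λ : Type*} [Field k] [Ring Λ] [Algebra k Λ]
    (I : Submodule k Λ)
    (hIleft : ∀ a ∈ I, ∀ b : Λ, b * a ∈ I) (hIright : ∀ a ∈ I, ∀ b : Λ, a * b ∈ I)
    (n : ℕ) (hn : 1 ≤ n)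
    {M : Type*} [AddCommGroup M] [Module k M] [Module Λ M] [IsScalarTower k Λ M]
    (A B : Submodule Λ M) (hAB : A ≤ B)
    (hfin : FiniteDimensional k (torsionSubspace k Λ (I ^ n) M))
    (hA : ∀ z : M ⧸ A, (∀ a ∈ I ^ n, a • z = 0) →
      ∃ x : M, (∀ a ∈ I ^ n, a • x = 0) ∧ A.mkQ x = z)
    (hB : ∀ z : M ⧸ B, (∀ a ∈ I ^ n, a • z = 0) →
      ∃ x : M, (∀ a ∈ I ^ n, a • x = 0) ∧ B.mkQ x = z) :
    ∀ z : M ⧸ A, z ∈ B.map A.mkQ → (∀ a ∈ I ^ n, a • z = 0) →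
      ∃ x ∈ B, (∀ a ∈ I ^ n, a • x = 0) ∧ A.mkQ x = z :=
  statement7_general I n A B hAB hA
end
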